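/- arXiv:math/0608405 — 2 statements merged into one kernel-verified Lean document; each statement's English description precedes it below -/
import Mathlib

section
/- Let ℓ, r : ℕ → ℤ take values only in {1, -1} and satisfy the vertex compatibility condition r k = -ℓ (k + 1) for every k : ℕ. Suppose i < j are natural numbers such that edge i is non-alternating (ℓ i = r i), edge j is non-alternating (ℓ j = r j), and every edge strictly between them is alternating (ℓ k ≠ r k for all k with i < k < j). Then ℓ i = -ℓ j; that is, consecutive non-alternating edges along the boundary of a region have opposite signs. -/
/-- Consecutive non-alternating edges along the boundary of a region have
opposite signs. -/
theorem consecutive_nonalternating_opposite_signs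
    (ℓ r : ℕ → ℤ)
    (hℓ : ∀ k : ℕ, ℓ k ∈ ({1, -1} : Set ℤ))
    (hr : ∀ k : ℕ, r k ∈ ({1, -1} : Set ℤ))
    (hcomp : ∀ k : ℕ, r k = -ℓ (k + 1))
    (i j : ℕ) (hij : i < j)
    (hi : ℓ i = r i) (hj : ℓ j = r j)
    (hbetween : ∀ k : ℕ, i < k → k < j → ℓ k ≠ r k) :
    ℓ i = -ℓ j := by
  have key : ∀ k : ℕ, i + 1 ≤ k → k ≤ j → ℓ k = ℓ (i + 1) := by
    intro k
    induction k with
    | zero => omega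
    | succ n ih =>
      intro h1 h2
      rcases Nat.lt_or_ge (i + 1) (n + 1) with h | h
      · have hn : ℓ n = ℓ (i + 1) := ih (by omega) (by omega)
        have halt : ℓ n ≠ r n := hbetween n (by omega) (by omega)
        have h1 := hℓ n; have h2 := hr n
        have hc := hcomp n
        simp only [Set.mem_insert_iff, Set.mem_singleton_iff] at h1 h2
        rcases h1 with h1 | h1 <;> rcases h2 with h2 | h2 <;> omega
      · have : n + 1 = i + 1 := by omega
        rw [this]
  have hkey := key j (by omega) le_rfl
  have hc := hcomp i
  rw [hi, hc, hkey]
end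

section
/- Let n ≥ 2 and m ≥ 2 be natural numbers, let ℓ, r : Fin n → ℤ take values only in {1, -1}, and suppose that for every i : Fin n with i + 1 < n we have r i = -ℓ (i+1), and additionally r (n-1) = -ℓ 0 (cyclic vertex compatibility). Let e : Fin m → Fin n be a strictly monotone map whose range is exactly the set of non-alternating indices {i : Fin n | ℓ i = r i}. Then for every k : Fin m with k + 1 < m one has ℓ (e (k+1)) = -ℓ (e k), and moreover ℓ (e 0) = -ℓ (e (m-1)); that is, listing the non-alternating edges of the boundary of a region in cyclic order, the signs alternate all the way around, including between the last and the first. -/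
/-!
Reading the boundary as the cyclic sequence of ends `ℓ 0, r 0, ℓ 1, r 1, …`, the sign `ℓ` is
preserved when passing an alternating edge (`ℓ (i + 1) = -r i = ℓ i`) and flipped when passing a
non-alternating one (`ℓ (i + 1) = -r i = -ℓ i`). Between two consecutive non-alternating edges
there are only alternating ones, so the sign flips exactly once; the same holds across the end of
the sequence, read on the indices `e (m - 1) + 1, …, n ≡ 0, …, e 0`.
-/

open Fin.NatCast

lemma eq_neg_of_ne_of_mem_one_neg_one {x y : ℤ} (hx : x ∈ ({1, -1} : Set ℤ))
    (hy : y ∈ ({1, -1} : Set ℤ)) (hxy : x ≠ y) : x = -y := by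
  rcases hx with rfl | rfl <;> rcases hy with rfl | rfl <;> simp_all

lemma Nat.apply_eq_apply_of_forall_succ_eq {α : Type*} {f : ℕ → α} {a b : ℕ} (hab : a ≤ b)
    (h : ∀ i, a ≤ i → i < b → f (i + 1) = f i) : f a = f b := by
  induction b, hab using Nat.le_induction with
  | base => rfl
  | succ b hab ih => rw [ih fun i hai hib => h i hai (by omega), h b hab (by omega)]

lemma StrictMono.notMem_range_of_lt_of_lt {α : Type*} [LinearOrder α] {m : ℕ} {e : Fin m → α}
    (he : StrictMono e) {k : Fin m} (hk : (k : ℕ) + 1 < m) {x : α} (hkx : e k < x)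
    (hxk : x < e ⟨k + 1, hk⟩) : x ∉ Set.range e := by
  rintro ⟨j, rfl⟩
  have hkj : (k : ℕ) < j := he.lt_iff_lt.1 hkx
  have hjk : (j : ℕ) < k + 1 := he.lt_iff_lt.1 hxk
  omega

lemma StrictMono.notMem_range_of_lt_apply_zero {α : Type*} [LinearOrder α] {m : ℕ}
    {e : Fin m → α} (he : StrictMono e) (hm : 0 < m) {x : α} (hx : x < e ⟨0, hm⟩) :
    x ∉ Set.range e := by
  rintro ⟨j, rfl⟩
  exact Nat.not_lt_zero _ (he.lt_iff_lt.1 hx)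

lemma StrictMono.notMem_range_of_apply_sub_one_lt {α : Type*} [LinearOrder α] {m : ℕ}
    {e : Fin m → α} (he : StrictMono e) (hm : 0 < m) {x : α} (hx : e ⟨m - 1, by omega⟩ < x) :
    x ∉ Set.range e := by
  rintro ⟨j, rfl⟩
  have : m - 1 < (j : ℕ) := he.lt_iff_lt.1 hx
  omega

lemma Fin.forall_eq_neg_apply_add_one {n : ℕ} [NeZero n] {ℓ r : Fin n → ℤ}
    (hcomp : ∀ i : Fin n, (h : (i : ℕ) + 1 < n) → r i = -ℓ ⟨(i : ℕ) + 1, h⟩)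
    (hcyc : r ⟨n - 1, Nat.sub_one_lt (NeZero.ne n)⟩ = -ℓ 0) (i : Fin n) :
    r i = -ℓ (i + 1) := by
  by_cases hi : (i : ℕ) + 1 < n
  · rw [hcomp i hi]
    congr
    exact (Fin.val_add_one_of_lt' hi).symm
  · have hlast : i = ⟨n - 1, Nat.sub_one_lt (NeZero.ne n)⟩ := by ext; simp; omega
    have hwrap : i + 1 = 0 := by ext; simp [Fin.val_add, show (i : ℕ) + 1 = n by omega]
    rw [hwrap, hlast, hcyc]

lemma apply_natCast_eq_of_forall_ne {n : ℕ} [NeZero n] {ℓ r : Fin n → ℤ}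
    (hℓ : ∀ i, ℓ i ∈ ({1, -1} : Set ℤ)) (hr : ∀ i, r i ∈ ({1, -1} : Set ℤ))
    (hstep : ∀ i : Fin n, r i = -ℓ (i + 1)) {a b : ℕ} (hab : a ≤ b) (hbn : b ≤ n)
    (halt : ∀ i : Fin n, a ≤ (i : ℕ) → (i : ℕ) < b → ℓ i ≠ r i) :
    ℓ (a : Fin n) = ℓ (b : Fin n) := by
  refine Nat.apply_eq_apply_of_forall_succ_eq (f := fun j : ℕ => ℓ j) hab fun j haj hjb => ?_
  have hj : ((j : Fin n) : ℕ) = j := Fin.val_cast_of_lt (by omega)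
  calc ℓ ((j + 1 : ℕ) : Fin n) = -r j := by rw [Nat.cast_succ, hstep, neg_neg]
    _ = ℓ j := (eq_neg_of_ne_of_mem_one_neg_one (hℓ _) (hr _)
          (halt _ (by omega) (by omega))).symm

/-- Listing the non-alternating edges of the boundary of a region in cyclic
order, the signs alternate all the way around, including between the last and
the first. -/
theorem signs_alternate_cyclically
    (n m : ℕ) (hn : 2 ≤ n) (hm : 2 ≤ m)
    (ℓ r : Fin n → ℤ)
    (hℓ : ∀ i : Fin n, ℓ i ∈ ({1, -1} : Set ℤ))
    (hr : ∀ i : Fin n, r i ∈ ({1, -1} : Set ℤ))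
    (hcomp : ∀ i : Fin n, (h : (i : ℕ) + 1 < n) → r i = -ℓ ⟨(i : ℕ) + 1, h⟩)
    (hcyc : r ⟨n - 1, by omega⟩ = -ℓ ⟨0, by omega⟩)
    (e : Fin m → Fin n) (hmono : StrictMono e)
    (hrange : Set.range e = {i : Fin n | ℓ i = r i}) :
    (∀ k : Fin m, (hk : (k : ℕ) + 1 < m) → ℓ (e ⟨(k : ℕ) + 1, hk⟩) = -ℓ (e k)) ∧
      ℓ (e ⟨0, by omega⟩) = -ℓ (e ⟨m - 1, by omega⟩) := by
  have : NeZero n := ⟨by omega⟩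
  have hstep := Fin.forall_eq_neg_apply_add_one hcomp hcyc
  have hrun {a b : ℕ} (hab : a ≤ b) (hbn : b ≤ n)
      (hgap : ∀ i : Fin n, a ≤ (i : ℕ) → (i : ℕ) < b → i ∉ Set.range e) :
      ℓ (a : Fin n) = ℓ (b : Fin n) :=
    apply_natCast_eq_of_forall_ne hℓ hr hstep hab hbn fun i hai hib h =>
      hgap i hai hib (hrange ▸ h)
  have hflip (k : Fin m) : ℓ (((e k : ℕ) + 1 : ℕ) : Fin n) = -ℓ (e k) := by
    have hk : ℓ (e k) = r (e k) :=
      (hrange ▸ Set.mem_range_self k : e k ∈ {i | ℓ i = r i})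
    rw [Nat.cast_succ, Fin.cast_val_eq_self, hk, hstep, neg_neg]
  refine ⟨fun k hk => ?_, ?_⟩
  · calc ℓ (e ⟨k + 1, hk⟩) = ℓ ((e ⟨k + 1, hk⟩ : ℕ) : Fin n) := by rw [Fin.cast_val_eq_self]
      _ = ℓ (((e k : ℕ) + 1 : ℕ) : Fin n) :=
        (hrun (hmono (Fin.lt_def.2 (Nat.lt_succ_self _))) (e _).isLt.le fun i hi1 hi2 =>
          hmono.notMem_range_of_lt_of_lt hk (Fin.lt_def.2 hi1) (Fin.lt_def.2 hi2)).symm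
      _ = -ℓ (e k) := hflip k
  · calc ℓ (e ⟨0, _⟩) = ℓ ((e ⟨0, by omega⟩ : ℕ) : Fin n) := by rw [Fin.cast_val_eq_self]
      _ = ℓ ((0 : ℕ) : Fin n) :=
        (hrun (Nat.zero_le _) (e _).isLt.le fun i _ hi =>
          hmono.notMem_range_of_lt_apply_zero (by omega) (Fin.lt_def.2 hi)).symm
      _ = ℓ (n : Fin n) := by rw [Nat.cast_zero, Fin.natCast_self]
      _ = ℓ (((e ⟨m - 1, by omega⟩ : ℕ) + 1 : ℕ) : Fin n) :=
        (hrun (e ⟨m - 1, by omega⟩).isLt le_rfl fun i hi _ =>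
          hmono.notMem_range_of_apply_sub_one_lt (by omega) (Fin.lt_def.2 hi)).symm
      _ = -ℓ (e ⟨m - 1, _⟩) := hflip _
end
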